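/- If two hyperbolic elements g, h of a Fuchsian group Γ share exactly one fixed point on ∂ℍ, then Γ is not discrete. Equivalently, in a discrete subgroup of PSL(2,ℝ), two hyperbolic elements either share both fixed points (and hence have a common axis) or share none. -/

import Mathlib

open UpperHalfPlane OnePoint Matrix
open scoped MatrixGroups

/-- Topology on `SL(2, ℝ)`, induced from the space of matrices. -/
instance : TopologicalSpace SL(2, ℝ) :=
  TopologicalSpace.induced (fun A : SL(2, ℝ) => (A : Matrix (Fin 2) (Fin 2) ℝ))
    inferInstance

/-- The Möbius action of `A ∈ SL(2, ℝ)` on the boundary circle `∂ℍ = ℝ ∪ {∞}`. -/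
noncomputable def boundaryMoebius (A : SL(2, ℝ)) : OnePoint ℝ → OnePoint ℝ :=
  fun x =>
    Option.elim x
      (if A.1 1 0 = 0 then (∞ : OnePoint ℝ) else ((A.1 0 0 / A.1 1 0 : ℝ) : OnePoint ℝ))
      (fun r =>
        if A.1 1 0 * r + A.1 1 1 = 0 then (∞ : OnePoint ℝ)
        else (((A.1 0 0 * r + A.1 0 1) / (A.1 1 0 * r + A.1 1 1) : ℝ) : OnePoint ℝ))

/-- The set of fixed points of `A ∈ SL(2, ℝ)` on the boundary circle `∂ℍ`. -/
noncomputable def boundaryFix (A : SL(2, ℝ)) : Set (OnePoint ℝ) :=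
  {x | boundaryMoebius A x = x}

/-! Conjugating by some `M ∈ SL(2, ℝ)` moves the common fixed point to `∞`, so that `g` and
`h` become upper triangular. Since `g` is hyperbolic its diagonal entry `a` has `|a| ≠ 1`, and
after replacing `g` by `g⁻¹` we may assume `|a| < 1`. The commutator `⁅h, g⁆` is then unipotent,
`[[1, t], [0, 1]]`, and `t ≠ 0`: an `h` commuting with `g` would permute the two fixed points
of `g`, and fixing `∞` it would fix the other one too. Conjugating by `g ^ n` turns the
commutator into `[[1, a ^ (2 n) t], [0, 1]]`, a sequence of nontrivial elements of `Γ` tending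
to `1`. -/

open Filter Topology Pointwise
open scoped commutatorElement

-- The topology on `SL(2, ℝ)` above is definitionally Mathlib's, whose group instance applies.
instance : IsTopologicalGroup SL(2, ℝ) := Matrix.SpecialLinearGroup.topologicalGroup

theorem Subgroup.not_discreteTopology_of_tendsto_one {G : Type*} [Group G] [TopologicalSpace G]
    {Γ : Subgroup G} {u : ℕ → G} (hu : ∀ n, u n ∈ Γ) (hne : ∀ n, u n ≠ 1)
    (hlim : Tendsto u atTop (𝓝 1)) : ¬ DiscreteTopology Γ := by
  intro _
  have hlimΓ : Tendsto (fun n => (⟨u n, hu n⟩ : Γ)) atTop (𝓝 1) :=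
    tendsto_subtype_rng.2 hlim
  rw [nhds_discrete, tendsto_pure] at hlimΓ
  obtain ⟨n, hn⟩ := hlimΓ.exists
  exact hne n (congrArg Subtype.val hn)

noncomputable instance : MulAction SL(2, ℝ) (OnePoint ℝ) :=
  MulAction.compHom _ Matrix.SpecialLinearGroup.toGL

theorem boundaryMoebius_apply (A : SL(2, ℝ)) (x : OnePoint ℝ) :
    boundaryMoebius A x = A • x := by
  cases x with
  | infty => simp [boundaryMoebius, smul_infty_eq_ite, MulAction.compHom_smul_def]; rfl
  | coe r => simp [boundaryMoebius, smul_some_eq_ite, MulAction.compHom_smul_def]; rfl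

theorem smul_coe_eq_ite (A : SL(2, ℝ)) (r : ℝ) : A • (r : OnePoint ℝ) =
    if A 1 0 * r + A 1 1 = 0 then ∞ else ↑((A 0 0 * r + A 0 1) / (A 1 0 * r + A 1 1)) :=
  (boundaryMoebius_apply A r).symm

theorem boundaryFix_eq_fixedBy (A : SL(2, ℝ)) :
    boundaryFix A = MulAction.fixedBy (OnePoint ℝ) A := by
  ext x
  simp [boundaryFix, boundaryMoebius_apply]

theorem boundaryFix_conj (M A : SL(2, ℝ)) :
    boundaryFix (M * A * M⁻¹) = M • boundaryFix A := by
  simp only [boundaryFix_eq_fixedBy, MulAction.smul_fixedBy]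

theorem infty_mem_boundaryFix_iff {A : SL(2, ℝ)} : ∞ ∈ boundaryFix A ↔ A 1 0 = 0 := by
  simp [boundaryFix_eq_fixedBy, MulAction.compHom_smul_def, smul_infty_eq_self_iff]

theorem exists_smul_eq_infty (x : OnePoint ℝ) : ∃ M : SL(2, ℝ), M • x = ∞ := by
  cases x with
  | infty => exact ⟨1, one_smul _ _⟩
  | coe r =>
    exact ⟨⟨!![0, -1; 1, -r], by simp [det_fin_two]⟩,
      (boundaryMoebius_apply _ _).symm.trans (if_pos (by simp))⟩

theorem trace_conj (M A : SL(2, ℝ)) :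
    (M * A * M⁻¹) 0 0 + (M * A * M⁻¹) 1 1 = A 0 0 + A 1 1 := by
  have h : trace ((M * A * M⁻¹ : SL(2, ℝ)) : Matrix (Fin 2) (Fin 2) ℝ) =
      trace (A : Matrix (Fin 2) (Fin 2) ℝ) := by
    rw [Matrix.SpecialLinearGroup.coe_mul, trace_mul_comm, ← Matrix.SpecialLinearGroup.coe_mul,
      inv_mul_cancel_left]
  simpa only [trace_fin_two] using h

section UpperTriangular

variable {A G H : SL(2, ℝ)}

theorem apply_zero_zero_mul_apply_one_one (hA : A 1 0 = 0) : A 0 0 * A 1 1 = 1 := by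
  have h := A.det_coe
  rwa [det_fin_two, hA, mul_zero, sub_zero] at h

theorem abs_apply_zero_zero_ne_one (hA : A 1 0 = 0) (htr : 2 < |A 0 0 + A 1 1|) :
    |A 0 0| ≠ 1 := by
  intro h1
  have hsq : A 0 0 * A 0 0 = 1 := by rw [← abs_mul_abs_self, h1, one_mul]
  have hdiag : A 1 1 = A 0 0 := by
    linear_combination A 0 0 * apply_zero_zero_mul_apply_one_one hA - A 1 1 * hsq
  rw [hdiag, ← two_mul, abs_mul, h1] at htr
  norm_num at htr

theorem apply_zero_zero_ne_apply_one_one (hA : A 1 0 = 0) (htr : 2 < |A 0 0 + A 1 1|) :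
    A 0 0 ≠ A 1 1 := by
  intro hdiag
  apply abs_apply_zero_zero_ne_one hA htr
  have hsq := apply_zero_zero_mul_apply_one_one hA
  rw [← hdiag, ← abs_mul_abs_self] at hsq
  nlinarith [abs_nonneg (A 0 0)]

theorem boundaryFix_eq_of_apply_one_zero_eq_zero (hA : A 1 0 = 0) (hd : A 0 0 ≠ A 1 1) :
    boundaryFix A = {∞, ↑(A 0 1 / (A 1 1 - A 0 0))} := by
  have hA11 : A 1 1 ≠ 0 := right_ne_zero_of_mul_eq_one (apply_zero_zero_mul_apply_one_one hA)
  have hsub : A 1 1 - A 0 0 ≠ 0 := sub_ne_zero.2 hd.symm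
  ext x
  cases x with
  | infty => simp [infty_mem_boundaryFix_iff, hA]
  | coe r =>
    rw [boundaryFix_eq_fixedBy, MulAction.mem_fixedBy, smul_coe_eq_ite, hA, zero_mul, zero_add,
      if_neg hA11]
    simp only [Set.mem_insert_iff, Set.mem_singleton_iff, coe_ne_infty, false_or, coe_eq_coe]
    rw [div_eq_iff hA11, eq_div_iff hsub]
    constructor <;> intro h <;> linarith

theorem not_commute_of_boundaryFix_inter_eq_infty (hA : A 1 0 = 0) (hd : A 0 0 ≠ A 1 1)
    (hfix : boundaryFix A ∩ boundaryFix H = {∞}) : ¬ Commute A H := by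
  intro hAH
  obtain ⟨r, hFixA⟩ : ∃ r : ℝ, boundaryFix A = {∞, (r : OnePoint ℝ)} :=
    ⟨_, boundaryFix_eq_of_apply_one_zero_eq_zero hA hd⟩
  have hHinf : H • (∞ : OnePoint ℝ) = ∞ := by
    have h : ∞ ∈ boundaryFix A ∩ boundaryFix H := hfix ▸ rfl
    simpa [boundaryFix_eq_fixedBy] using h.2
  have hHr : H • (r : OnePoint ℝ) ∈ boundaryFix A := by
    have hinv : H • boundaryFix A = boundaryFix A := by
      rw [← boundaryFix_conj, ← hAH.eq, mul_inv_cancel_right]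
    rw [← hinv]
    exact Set.smul_mem_smul_set (by simp [hFixA])
  rw [hFixA] at hHr
  rcases hHr with h | h
  · exact coe_ne_infty _ (smul_left_cancel H (h.trans hHinf.symm))
  · have hr : (r : OnePoint ℝ) ∈ boundaryFix A ∩ boundaryFix H :=
      ⟨by simp [hFixA], by simpa [boundaryFix_eq_fixedBy] using h⟩
    rw [hfix] at hr
    exact coe_ne_infty _ hr

def upperUnipotent (t : ℝ) : SL(2, ℝ) := ⟨!![1, t; 0, 1], by simp [det_fin_two]⟩

@[simp]
theorem coe_upperUnipotent (t : ℝ) :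
    (upperUnipotent t : Matrix (Fin 2) (Fin 2) ℝ) = !![1, t; 0, 1] := rfl

theorem upperUnipotent_zero : upperUnipotent 0 = 1 := by
  ext i j
  fin_cases i <;> fin_cases j <;> rfl

theorem continuous_upperUnipotent : Continuous upperUnipotent :=
  continuous_induced_rng.2 (by unfold upperUnipotent; fun_prop)

theorem eq_upperUnipotent (h10 : A 1 0 = 0) (h00 : A 0 0 = 1) : A = upperUnipotent (A 0 1) := by
  have h11 := apply_zero_zero_mul_apply_one_one h10
  rw [h00, one_mul] at h11
  ext i j
  fin_cases i <;> fin_cases j <;> simp [h10, h00, h11]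

theorem conj_upperUnipotent (hG : G 1 0 = 0) (t : ℝ) :
    G * upperUnipotent t * G⁻¹ = upperUnipotent (G 0 0 ^ 2 * t) := by
  have h := apply_zero_zero_mul_apply_one_one hG
  ext i j
  fin_cases i <;> fin_cases j <;>
    simp [Matrix.SpecialLinearGroup.coe_mul, mul_apply, Fin.sum_univ_two,
      Matrix.SpecialLinearGroup.coe_inv, adjugate_fin_two, hG] <;>
    first | ring1 | linear_combination h

theorem pow_conj_upperUnipotent (hG : G 1 0 = 0) (t : ℝ) (n : ℕ) :
    G ^ n * upperUnipotent t * (G ^ n)⁻¹ = upperUnipotent (G 0 0 ^ (2 * n) * t) := by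
  induction n with
  | zero => simp
  | succ n ih =>
    have hconj : G ^ (n + 1) * upperUnipotent t * (G ^ (n + 1))⁻¹ =
        G * (G ^ n * upperUnipotent t * (G ^ n)⁻¹) * G⁻¹ := by group
    rw [hconj, ih, conj_upperUnipotent hG]
    ring_nf

theorem commutator_eq_upperUnipotent (hG : G 1 0 = 0) (hH : H 1 0 = 0) :
    ⁅H, G⁆ = upperUnipotent (⁅H, G⁆ 0 1) := by
  refine eq_upperUnipotent ?_ ?_ <;>
    simp [commutatorElement_def, Matrix.SpecialLinearGroup.coe_mul, mul_apply, Fin.sum_univ_two,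
      Matrix.SpecialLinearGroup.coe_inv, adjugate_fin_two, hG, hH]
  linear_combination (G 0 0 * G 1 1) * apply_zero_zero_mul_apply_one_one hH +
    apply_zero_zero_mul_apply_one_one hG

theorem tendsto_pow_conj_commutator (hG : G 1 0 = 0) (hH : H 1 0 = 0) (hGa : |G 0 0| < 1) :
    Tendsto (fun n : ℕ => G ^ n * ⁅H, G⁆ * (G ^ n)⁻¹) atTop (𝓝 1) := by
  obtain ⟨t, ht⟩ : ∃ t, ⁅H, G⁆ = upperUnipotent t := ⟨_, commutator_eq_upperUnipotent hG hH⟩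
  have hsq : |G 0 0 ^ 2| < 1 := by rwa [abs_pow, sq_lt_one_iff₀ (abs_nonneg _)]
  have hlim : Tendsto (fun n : ℕ => G 0 0 ^ (2 * n) * t) atTop (𝓝 0) := by
    simpa [pow_mul] using (tendsto_pow_atTop_nhds_zero_of_abs_lt_one hsq).mul_const t
  simp only [ht, pow_conj_upperUnipotent hG, ← upperUnipotent_zero]
  exact (continuous_upperUnipotent.tendsto 0).comp hlim

end UpperTriangular

section Conjugate

variable {Γ : Subgroup SL(2, ℝ)} {M g h : SL(2, ℝ)}

theorem not_discreteTopology_of_conj_contracting (hg : g ∈ Γ) (hh : h ∈ Γ)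
    (hG : (M * g * M⁻¹) 1 0 = 0) (hH : (M * h * M⁻¹) 1 0 = 0)
    (hGa : |(M * g * M⁻¹) 0 0| < 1) (hgh : ¬ Commute g h) : ¬ DiscreteTopology Γ := by
  have hconj : ∀ n : ℕ, g ^ n * ⁅h, g⁆ * (g ^ n)⁻¹ =
      M⁻¹ * ((M * g * M⁻¹) ^ n * ⁅M * h * M⁻¹, M * g * M⁻¹⁆ * ((M * g * M⁻¹) ^ n)⁻¹) * M := by
    intro n
    simp only [conj_pow, commutatorElement_def]
    group
  refine Subgroup.not_discreteTopology_of_tendsto_one (u := fun n => g ^ n * ⁅h, g⁆ * (g ^ n)⁻¹)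
    (fun n => ?_) (fun n => ?_) ?_
  · have hcomm : ⁅h, g⁆ ∈ Γ := by
      rw [commutatorElement_def]
      exact Γ.mul_mem (Γ.mul_mem (Γ.mul_mem hh hg) (Γ.inv_mem hh)) (Γ.inv_mem hg)
    exact Γ.mul_mem (Γ.mul_mem (Γ.pow_mem hg n) hcomm) (Γ.inv_mem (Γ.pow_mem hg n))
  · rw [Ne, conj_eq_one_iff, commutatorElement_eq_one_iff_commute]
    exact fun hc => hgh hc.symm
  · simpa [hconj] using ((tendsto_pow_conj_commutator hG hH hGa).const_mul M⁻¹).mul_const M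

theorem not_discreteTopology_of_conj_upperTriangular (hg : g ∈ Γ) (hh : h ∈ Γ)
    (hG : (M * g * M⁻¹) 1 0 = 0) (hH : (M * h * M⁻¹) 1 0 = 0)
    (hGa : |(M * g * M⁻¹) 0 0| ≠ 1) (hgh : ¬ Commute g h) : ¬ DiscreteTopology Γ := by
  rcases hGa.lt_or_gt with hlt | hgt
  · exact not_discreteTopology_of_conj_contracting hg hh hG hH hlt hgh
  · have hinv : M * g⁻¹ * M⁻¹ = (M * g * M⁻¹)⁻¹ := by group
    have hdet := congrArg abs (apply_zero_zero_mul_apply_one_one hG)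
    rw [abs_mul, abs_one] at hdet
    refine not_discreteTopology_of_conj_contracting (Γ.inv_mem hg) hh ?_ hH ?_
      (by rwa [Commute.inv_left_iff])
    · rw [hinv, Matrix.SpecialLinearGroup.SL2_inv_expl]
      exact neg_eq_zero.2 hG
    · rw [hinv, Matrix.SpecialLinearGroup.SL2_inv_expl]
      change |(M * g * M⁻¹) 1 1| < 1
      nlinarith [abs_nonneg ((M * g * M⁻¹) 1 1)]

end Conjugate

theorem not_discrete_of_shared_fixed_point_general (Γ : Subgroup SL(2, ℝ)) (g h : SL(2, ℝ))
    (hg : g ∈ Γ) (hh : h ∈ Γ)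
    (hgh : 2 < |g.1 0 0 + g.1 1 1|)
    (hshare : ∃ x : OnePoint ℝ, boundaryFix g ∩ boundaryFix h = {x}) :
    ¬ DiscreteTopology Γ := by
  obtain ⟨x, hx⟩ := hshare
  obtain ⟨M, hMx⟩ := exists_smul_eq_infty x
  have hfix : boundaryFix (M * g * M⁻¹) ∩ boundaryFix (M * h * M⁻¹) = {∞} := by
    rw [boundaryFix_conj, boundaryFix_conj, ← Set.smul_set_inter, hx, Set.smul_set_singleton, hMx]
  have hinf : ∞ ∈ boundaryFix (M * g * M⁻¹) ∩ boundaryFix (M * h * M⁻¹) := hfix ▸ rfl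
  have hG := infty_mem_boundaryFix_iff.1 hinf.1
  have hH := infty_mem_boundaryFix_iff.1 hinf.2
  have hGtr : 2 < |(M * g * M⁻¹) 0 0 + (M * g * M⁻¹) 1 1| := by rwa [trace_conj]
  have hnc : ¬ Commute g h := fun hc =>
    not_commute_of_boundaryFix_inter_eq_infty hG (apply_zero_zero_ne_apply_one_one hG hGtr) hfix
      (by simpa using hc.map (MulAut.conj M))
  exact not_discreteTopology_of_conj_upperTriangular hg hh hG hH
    (abs_apply_zero_zero_ne_one hG hGtr) hnc

/-- If two hyperbolic elements `g, h` of a subgroup `Γ ≤ SL(2, ℝ)`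
share exactly one fixed point on `∂ℍ`, then `Γ` is not discrete.  (Equivalently, in a
discrete subgroup of `PSL(2, ℝ)` two hyperbolic elements share both fixed points or
none.) -/
theorem not_discrete_of_shared_fixed_point (Γ : Subgroup SL(2, ℝ)) (g h : SL(2, ℝ))
    (hg : g ∈ Γ) (hh : h ∈ Γ)
    (hgh : 2 < |g.1 0 0 + g.1 1 1|) (hhh : 2 < |h.1 0 0 + h.1 1 1|)
    (hshare : ∃ x : OnePoint ℝ, boundaryFix g ∩ boundaryFix h = {x}) :
    ¬ DiscreteTopology Γ :=
  not_discrete_of_shared_fixed_point_general Γ g h hg hh hgh hshare
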